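/- Let i ≥ 1 and ℓ ≥ 1 be such that the factor of the Thue-Morse word t of length ℓ starting at position i is a palindrome, 2i + ℓ ≡ 0 (mod 4), and i ≢ 0 (mod 4). Then the factor of t of length ℓ + 2 starting at position i − 1 is also a palindrome, and (when ℓ ≥ 2) so is the factor of length ℓ − 2 starting at position i + 1. -/
import Mathlib


/-- The Thue–Morse word: `tm n` is the number of ones (sum of binary digits)
in the binary expansion of `n`, taken mod 2. -/
def tm (n : ℕ) : ℕ := (Nat.digits 2 n).sum % 2

/-- `ps` is a factorization of the finite word `w` into nonempty palindromes. -/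
def IsPalDecomp (w : List ℕ) (ps : List (List ℕ)) : Prop :=
  ps.flatten = w ∧ ∀ p ∈ ps, p ≠ [] ∧ p.Palindrome

/-- The palindromic length of a finite word: the least number of nonempty
palindromes whose concatenation is the word (0 for the empty word). -/
noncomputable def palLen (w : List ℕ) : ℕ :=
  sInf {k | ∃ ps, ps.length = k ∧ IsPalDecomp w ps}

/-- `pplTM n` is the palindromic length of the prefix of length `n`
of the Thue–Morse word. -/
noncomputable def pplTM (n : ℕ) : ℕ := palLen ((List.range n).map tm)

/-- The factor of the Thue–Morse word of length `ℓ` starting at position `i`. -/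
def tmFactor (i ℓ : ℕ) : List ℕ := (List.range ℓ).map (fun j => tm (i + j))

lemma tm_lt (n : ℕ) : tm n < 2 := Nat.mod_lt _ (by norm_num)

lemma tm_two_mul (n : ℕ) : tm (2 * n) = tm n := by
  rcases Nat.eq_zero_or_pos n with h | h
  · simp [h]
  · unfold tm
    rw [Nat.digits_def' (by norm_num : 1 < 2) (by omega : 0 < 2 * n)]
    simp [Nat.mul_div_cancel_left, Nat.mul_mod_right]

lemma tm_two_mul_add_one (n : ℕ) : tm (2 * n + 1) = (tm n + 1) % 2 := by
  unfold tm
  rw [Nat.digits_def' (by norm_num : 1 < 2) (by omega : 0 < 2 * n + 1)]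
  have h1 : (2 * n + 1) % 2 = 1 := by omega
  have h2 : (2 * n + 1) / 2 = n := by omega
  rw [h1, h2]
  simp [Nat.add_mod, Nat.add_comm]

lemma tm_step (n : ℕ) (h : n % 4 = 1 ∨ n % 4 = 3) : tm n = (tm (n - 1) + 1) % 2 := by
  rcases h with h | h
  · obtain ⟨m, rfl⟩ : ∃ m, n = 4 * m + 1 := ⟨n / 4, by omega⟩
    have e0 : 4 * m + 1 - 1 = 2 * (2 * m) := by omega
    have e1 : 4 * m + 1 = 2 * (2 * m) + 1 := by ring
    rw [e0, e1, tm_two_mul, tm_two_mul_add_one]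
  · obtain ⟨m, rfl⟩ : ∃ m, n = 4 * m + 3 := ⟨n / 4, by omega⟩
    have e0 : 4 * m + 3 - 1 = 2 * (2 * m + 1) := by omega
    have e1 : 4 * m + 3 = 2 * (2 * m + 1) + 1 := by ring
    rw [e0, e1, tm_two_mul, tm_two_mul_add_one]

lemma tm_step2 (n : ℕ) (h : n % 4 = 2) : tm n = tm (n - 1) := by
  obtain ⟨m, rfl⟩ : ∃ m, n = 4 * m + 2 := ⟨n / 4, by omega⟩
  have e0 : 4 * m + 2 - 1 = 2 * (2 * m) + 1 := by omega
  have e1 : 4 * m + 2 = 2 * (2 * m + 1) := by ring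
  rw [e0, e1, tm_two_mul, tm_two_mul_add_one, tm_two_mul_add_one, tm_two_mul]

lemma tmFactor_pal_iff (i ℓ : ℕ) :
    (tmFactor i ℓ).Palindrome ↔ ∀ j, j < ℓ → tm (i + j) = tm (i + (ℓ - 1 - j)) := by
  have hlen : (tmFactor i ℓ).length = ℓ := by simp [tmFactor]
  have hget : ∀ (j : ℕ) (h : j < ℓ),
      (tmFactor i ℓ)[j]'(by omega) = tm (i + j) := by
    intro j h
    simp [tmFactor]
  rw [List.Palindrome.iff_reverse_eq]
  constructor
  · intro h j hj
    have h' : ((tmFactor i ℓ).reverse)[j]'(by simp [hlen]; omega)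
        = (tmFactor i ℓ)[j]'(by omega) := by
      simp_rw [h]
    rw [List.getElem_reverse] at h'
    simp only [tmFactor, List.getElem_map, List.getElem_range, List.length_map,
      List.length_range] at h'
    exact h'.symm
  · intro h
    apply List.ext_getElem
    · simp
    · intro j h1 h2
      rw [List.getElem_reverse]
      simp only [tmFactor, List.getElem_map, List.getElem_range, List.length_map,
        List.length_range] at h2 ⊢
      exact (h j h2).symm

/-- If the factor of the Thue–Morse word of length `ℓ ≥ 1` starting at
position `i ≥ 1` is a palindrome of type `(m, 4−m)` with `m ≠ 0`, then the
factor of length `ℓ + 2` starting at `i − 1` is also a palindrome, and (when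
`ℓ ≥ 2`) so is the factor of length `ℓ − 2` starting at `i + 1`. -/
theorem tm_palindrome_extend (i ℓ : ℕ) (hi : 1 ≤ i) (hℓ : 1 ≤ ℓ)
    (hpal : (tmFactor i ℓ).Palindrome) (htype : (2 * i + ℓ) % 4 = 0)
    (hm : i % 4 ≠ 0) :
    (tmFactor (i - 1) (ℓ + 2)).Palindrome ∧
      (2 ≤ ℓ → (tmFactor (i + 1) (ℓ - 2)).Palindrome) := by
  have hp := (tmFactor_pal_iff i ℓ).mp hpal
  have hb1 : tm i = tm (i + ℓ - 1) := by
    have h := hp 0 (by omega)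
    rw [show i + 0 = i by omega, show i + (ℓ - 1 - 0) = i + ℓ - 1 by omega] at h
    exact h
  have hkey : tm (i - 1) = tm (i + ℓ) := by
    have b1 := tm_lt (i - 1)
    have b2 := tm_lt i
    have b3 := tm_lt (i + ℓ - 1)
    have b4 := tm_lt (i + ℓ)
    rcases (show i % 4 = 1 ∨ i % 4 = 2 ∨ i % 4 = 3 by omega) with h | h | h
    · have e1 := tm_step i (Or.inl h)
      have e2 := tm_step (i + ℓ) (Or.inr (by omega))
      omega
    · have e1 := tm_step2 i h
      have e2 := tm_step2 (i + ℓ) (by omega)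
      omega
    · have e1 := tm_step i (Or.inr h)
      have e2 := tm_step (i + ℓ) (Or.inl (by omega))
      omega
  constructor
  · rw [tmFactor_pal_iff]
    intro j hj
    rcases (show j = 0 ∨ j = ℓ + 1 ∨ (1 ≤ j ∧ j ≤ ℓ) by omega) with h | h | h
    · subst h
      rw [show i - 1 + 0 = i - 1 by omega,
        show i - 1 + (ℓ + 2 - 1 - 0) = i + ℓ by omega]
      exact hkey
    · subst h
      rw [show i - 1 + (ℓ + 1) = i + ℓ by omega,
        show i - 1 + (ℓ + 2 - 1 - (ℓ + 1)) = i - 1 by omega]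
      exact hkey.symm
    · have hh := hp (j - 1) (by omega)
      rw [show i + (j - 1) = i - 1 + j by omega,
        show i + (ℓ - 1 - (j - 1)) = i - 1 + (ℓ + 2 - 1 - j) by omega] at hh
      exact hh
  · intro h2
    rw [tmFactor_pal_iff]
    intro j hj
    have hh := hp (j + 1) (by omega)
    rw [show i + (j + 1) = i + 1 + j by omega,
      show i + (ℓ - 1 - (j + 1)) = i + 1 + (ℓ - 2 - 1 - j) by omega] at hh
    exact hh
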